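/- Let D be a digraph and v a universal vertex of D. Then D is α-diperfect if and only if D − v is α-diperfect. -/

import Mathlib

open Relation

variable {V : Type*}

/-- `u` and `v` are adjacent in the digraph with arc relation `A`. -/
def DAdj (A : V → V → Prop) (u v : V) : Prop := A u v ∨ A v u

/-- `v` is a source: no arc enters `v`. -/
def IsSource (A : V → V → Prop) (v : V) : Prop := ∀ u, ¬ A u v

/-- `v` is a sink: no arc leaves `v`. -/
def IsSink (A : V → V → Prop) (v : V) : Prop := ∀ u, ¬ A v u

/-- A stable (independent) set of the digraph. -/
def IsStable (A : V → V → Prop) (S : Set V) : Prop :=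
  ∀ u ∈ S, ∀ v ∈ S, u ≠ v → ¬ DAdj A u v

/-- The stability number. -/
noncomputable def alphaNum (A : V → V → Prop) : ℕ :=
  sSup {n | ∃ S : Set V, IsStable A S ∧ S.ncard = n}

/-- A maximum stable set. -/
def IsMaxStable (A : V → V → Prop) (S : Set V) : Prop :=
  IsStable A S ∧ ∀ T : Set V, IsStable A T → T.ncard ≤ S.ncard

/-- A (nonempty) directed path, given as its list of vertices. -/
def IsDiPath (A : V → V → Prop) (l : List V) : Prop :=
  l ≠ [] ∧ l.Nodup ∧ l.Chain' A

/-- A path partition of the digraph: every vertex lies on exactly one of the paths. -/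
def IsPathPartition (A : V → V → Prop) (P : Set (List V)) : Prop :=
  (∀ l ∈ P, IsDiPath A l) ∧ ∀ v : V, ∃! l, l ∈ P ∧ v ∈ l

/-- An `S`-path partition: each path contains exactly one vertex of `S`. -/
def IsSPartition (A : V → V → Prop) (S : Set V) (P : Set (List V)) : Prop :=
  IsPathPartition A P ∧ ∀ l ∈ P, ∃! s, s ∈ l ∧ s ∈ S

/-- An `S`-BE-path partition: each path contains exactly one vertex of `S`,
which is moreover an endpoint of the path. -/
def IsBEPartition (A : V → V → Prop) (S : Set V) (P : Set (List V)) : Prop :=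
  IsSPartition A S P ∧
    ∀ l ∈ P, ∀ s ∈ l, s ∈ S → l.head? = some s ∨ l.getLast? = some s

/-- The α-property: every maximum stable set admits an `S`-path partition. -/
def AlphaProperty (A : V → V → Prop) : Prop :=
  ∀ S : Set V, IsMaxStable A S → ∃ P, IsSPartition A S P

/-- The BE-property: every maximum stable set admits an `S`-BE-path partition. -/
def BEProperty (A : V → V → Prop) : Prop :=
  ∀ S : Set V, IsMaxStable A S → ∃ P, IsBEPartition A S P

/-- α-diperfect: every induced subdigraph satisfies the α-property. -/
def AlphaDiperfect (A : V → V → Prop) : Prop :=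
  ∀ W : Set V, AlphaProperty (fun a b : W => A a.1 b.1)

/-- BE-diperfect: every induced subdigraph satisfies the BE-property. -/
def BEDiperfect (A : V → V → Prop) : Prop :=
  ∀ W : Set V, BEProperty (fun a b : W => A a.1 b.1)

/-- Mutual reachability. -/
def MutReach (A : V → V → Prop) (u v : V) : Prop :=
  ReflTransGen A u v ∧ ReflTransGen A v u

/-- Semicomplete digraph: any two distinct vertices are adjacent. -/
def Semicomplete (A : V → V → Prop) : Prop :=
  ∀ u v : V, u ≠ v → DAdj A u v

/-- Strongly connected digraph. -/
def Strong (A : V → V → Prop) : Prop :=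
  ∀ u v : V, ReflTransGen A u v

/-- The digraph has an induced transitive triangle. -/
def HasInducedTransitiveTriangle (A : V → V → Prop) : Prop :=
  ∃ a b c : V, a ≠ b ∧ a ≠ c ∧ b ≠ c ∧
    A a b ∧ A a c ∧ A c b ∧ ¬ A b a ∧ ¬ A c a ∧ ¬ A b c

/-- The digraph is a blocking odd cycle: its underlying graph is an odd cycle
`x_1 x_2 ⋯ x_{2k+1} x_1` (with `k ≥ 1`; here `x i` is `x_{i+1}`), and both `x_1`
and `x_2` are each a source or a sink. -/
def IsBlockingOddCycle (A : V → V → Prop) : Prop :=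
  ∃ (k : ℕ) (x : ZMod (2 * k + 1) → V), 1 ≤ k ∧ Function.Bijective x ∧
    (∀ i j, DAdj A (x i) (x j) ↔ (j = i + 1 ∨ i = j + 1)) ∧
    (IsSource A (x 0) ∨ IsSink A (x 0)) ∧
    (IsSource A (x 1) ∨ IsSink A (x 1))

/-- The digraph is an anti-directed odd cycle: its underlying graph is an odd cycle
`x_1 ⋯ x_{2k+1} x_1` with `k ≥ 2` (here `x m` is `x_{m+1}`), and each of
`x_1, x_2, x_3, x_4, x_6, x_8, …, x_{2k}` is a source or a sink. -/
def IsAntiDirectedOddCycle (A : V → V → Prop) : Prop :=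
  ∃ (k : ℕ) (x : ZMod (2 * k + 1) → V), 2 ≤ k ∧ Function.Bijective x ∧
    (∀ i j, DAdj A (x i) (x j) ↔ (j = i + 1 ∨ i = j + 1)) ∧
    ∀ m : ℕ, m ≤ 2 * k →
      (m ≤ 3 ∨ (5 ≤ m ∧ m ≤ 2 * k - 1 ∧ Odd m)) →
      (IsSource A (x (m : ZMod (2 * k + 1))) ∨ IsSink A (x (m : ZMod (2 * k + 1))))

/-- `v` is a universal vertex. -/
def IsUniversal (A : V → V → Prop) (v : V) : Prop := ∀ u, u ≠ v → DAdj A u v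

/-- The underlying simple graph of a digraph. -/
def underlyingGraph (A : V → V → Prop) : SimpleGraph V where
  Adj u v := u ≠ v ∧ DAdj A u v
  symm := ⟨fun _ _ h => ⟨h.1.symm, h.2.symm⟩⟩
  loopless := ⟨fun _ h => h.1 rfl⟩

/-- The underlying graph of the digraph is a cycle. -/
def UnderlyingIsCycle (A : V → V → Prop) : Prop :=
  ∃ (n : ℕ) (x : ZMod n → V), 3 ≤ n ∧ Function.Bijective x ∧
    ∀ i j, DAdj A (x i) (x j) ↔ (j = i + 1 ∨ i = j + 1)

/-- A perfect graph: every induced subgraph has chromatic number equal to its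
clique number. -/
def GraphPerfect (G : SimpleGraph V) : Prop :=
  ∀ W : Set V, (G.induce W).chromaticNumber = ((G.induce W).cliqueNum : ℕ∞)

/-- A Hamilton directed path whose endpoints are `{s, t}` (in some order). -/
def HamiltonPathBetween (A : V → V → Prop) (s t : V) : Prop :=
  ∃ l : List V, IsDiPath A l ∧ (∀ v : V, v ∈ l) ∧
    ((l.head? = some s ∧ l.getLast? = some t) ∨
      (l.head? = some t ∧ l.getLast? = some s))

/-- A Hamilton directed path starting at `s` and ending at `t`. -/
def HamiltonPathFromTo (A : V → V → Prop) (s t : V) : Prop :=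
  ∃ l : List V, IsDiPath A l ∧ (∀ v : V, v ∈ l) ∧
    l.head? = some s ∧ l.getLast? = some t

/-- The exceptional strong semicomplete digraph on four vertices
(`a,b,c,d = 0,1,2,3`): the 4-cycle `a→d→c→b→a` together with digons `a↔c`, `b↔d`. -/
def BadFour : Fin 4 → Fin 4 → Prop := fun u v =>
  (u, v) ∈ ({(0,3), (3,2), (2,1), (1,0), (0,2), (2,0), (1,3), (3,1)} :
    Set (Fin 4 × Fin 4))

/-- A locally in-semicomplete digraph: any two in-neighbours of a vertex are adjacent. -/
def LocallyInSemicomplete (A : V → V → Prop) : Prop :=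
  ∀ v u w : V, A u v → A w v → u ≠ w → DAdj A u w

/-- A strong component: a maximal set of pairwise mutually reachable vertices. -/
def IsStrongComponent (A : V → V → Prop) (X : Set V) : Prop :=
  X.Nonempty ∧ (∀ u ∈ X, ∀ v ∈ X, MutReach A u v) ∧
    ∀ u v, v ∈ X → MutReach A u v → u ∈ X

/-- `C` is the vertex set of an induced cycle of `G`. -/
def InducedCycleSet (G : SimpleGraph V) (C : Set V) : Prop :=
  ∃ (n : ℕ) (x : ZMod n → V), 3 ≤ n ∧ Function.Injective x ∧ Set.range x = C ∧
    ∀ i j, G.Adj (x i) (x j) ↔ (j = i + 1 ∨ i = j + 1)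

/-- `G` contains a subdivision of `K₄`: four branch vertices joined by
pairwise internally disjoint paths. -/
def HasK4Subdivision (G : SimpleGraph V) : Prop :=
  ∃ (b : Fin 4 → V) (P : ∀ i j : Fin 4, G.Walk (b i) (b j)),
    Function.Injective b ∧
    (∀ i j, i ≠ j → (P i j).IsPath) ∧
    (∀ i j m, i ≠ j → b m ∈ (P i j).support → m = i ∨ m = j) ∧
    (∀ i j k l, i ≠ j → k ≠ l → ({i, j} : Finset (Fin 4)) ≠ {k, l} →
      ∀ v, v ∈ (P i j).support → v ∈ (P k l).support →
        (v = b i ∨ v = b j) ∧ (v = b k ∨ v = b l))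

/-- 2-connected: connected, at least 3 vertices, and no cut vertex. -/
def TwoConnected (G : SimpleGraph V) : Prop :=
  G.Connected ∧ 3 ≤ Nat.card V ∧
    ∀ v : V, (G.induce {u | u ≠ v}).Preconnected

/-!
A maximum stable set containing the universal vertex `v` is `{v}`; then the digraph is
semicomplete and, by Rédei's theorem, a single Hamiltonian path is the required partition.
A maximum stable set avoiding `v` is maximum stable in `D - v`, and `v`, adjacent to every
vertex, can be inserted into any path of a partition of `D - v`. An induced subdigraph of `D`
either avoids `v` or contains it as a universal vertex, so this proves one direction; the
other holds because induced subdigraphs of `D - v` are induced subdigraphs of `D`.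
-/

/-- `P` is an `S`-path partition of the induced subdigraph on `W`, its paths written with
vertices of the ambient type. -/
structure IsSPartitionOn {α : Type*} (A : α → α → Prop) (W S : Set α) (P : Set (List α)) :
    Prop where
  isDiPath : ∀ l ∈ P, IsDiPath A l
  subset : ∀ l ∈ P, ∀ x ∈ l, x ∈ W
  existsUnique_mem : ∀ x ∈ W, ∃! l, l ∈ P ∧ x ∈ l
  existsUnique_mem_inter : ∀ l ∈ P, ∃! s, s ∈ l ∧ s ∈ S

section

variable {α β : Type*} {A : α → α → Prop} {B : β → β → Prop}

theorem DAdj.symm {u w : α} (h : DAdj A u w) : DAdj A w u := Or.symm h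

theorem List.IsChain.exists_append_cons_append (v : α) {l : List α} (hl : l.IsChain A)
    (hadj : ∀ u ∈ l, DAdj A u v) :
    ∃ l₁ l₂, l = l₁ ++ l₂ ∧ (l₁ ++ v :: l₂).IsChain A := by
  induction l with
  | nil => exact ⟨[], [], rfl, List.isChain_singleton v⟩
  | cons a t ih =>
    rcases hadj a List.mem_cons_self with hav | hva
    · obtain ⟨t₁, t₂, rfl, hch⟩ := ih hl.tail fun u hu => hadj u (List.mem_cons_of_mem a hu)
      refine ⟨a :: t₁, t₂, rfl, ?_⟩
      cases t₁ with
      | nil => exact hch.cons_cons hav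
      | cons b t₁ => exact hch.cons_cons (List.isChain_cons_cons.mp hl).1
    · exact ⟨[], a :: t, rfl, hl.cons_cons hva⟩

theorem List.IsChain.exists_perm_cons (v : α) {l : List α} (hl : l.IsChain A)
    (hadj : ∀ u ∈ l, DAdj A u v) : ∃ l' : List α, l'.IsChain A ∧ l'.Perm (v :: l) := by
  obtain ⟨l₁, l₂, rfl, hch⟩ := hl.exists_append_cons_append v hadj
  exact ⟨_, hch, List.perm_middle⟩

/-- Rédei's theorem, in list form. -/
theorem List.Pairwise.exists_perm_isChain {l : List α} (hl : l.Pairwise (DAdj A)) :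
    ∃ l' : List α, l'.Perm l ∧ l'.IsChain A := by
  induction l with
  | nil => exact ⟨[], List.Perm.refl _, List.IsChain.nil⟩
  | cons a t ih =>
    obtain ⟨t', ht', hch⟩ := ih (List.pairwise_cons.mp hl).2
    obtain ⟨l', hch', hl'⟩ := hch.exists_perm_cons a fun u hu =>
      ((List.pairwise_cons.mp hl).1 u (ht'.mem_iff.mp hu)).symm
    exact ⟨l', hl'.trans (ht'.cons a), hch'⟩

theorem Semicomplete.exists_hamiltonian_isDiPath [Finite α] [Nonempty α] (h : Semicomplete A) :
    ∃ l, IsDiPath A l ∧ ∀ x, x ∈ l := by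
  have := Fintype.ofFinite α
  have hnd := Finset.univ.nodup_toList (α := α)
  obtain ⟨l, hl, hch⟩ := (hnd.pairwise_of_forall_ne fun u _ w _ => h u w).exists_perm_isChain
  have hall : ∀ x, x ∈ l := fun x => hl.mem_iff.mpr (by simp)
  exact ⟨l, ⟨List.ne_nil_of_mem (hall (Classical.arbitrary α)), hl.nodup_iff.mpr hnd, hch⟩, hall⟩

theorem IsDiPath.exists_perm_cons {v : α} {l : List α} (hl : IsDiPath A l) (hv : v ∉ l)
    (hadj : ∀ u ∈ l, DAdj A u v) : ∃ l', IsDiPath A l' ∧ l'.Perm (v :: l) := by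
  obtain ⟨l', hch, hperm⟩ := List.IsChain.exists_perm_cons (A := A) v hl.2.2 hadj
  exact ⟨l', ⟨List.ne_nil_of_mem (hperm.mem_iff.mpr List.mem_cons_self),
    hperm.nodup_iff.mpr (List.nodup_cons.mpr ⟨hv, hl.2.1⟩), hch⟩, hperm⟩

theorem IsDiPath.map {f : α → β} (hf : Function.Injective f)
    (hAB : ∀ a b, A a b → B (f a) (f b)) {l : List α} (hl : IsDiPath A l) :
    IsDiPath B (l.map f) :=
  ⟨by simpa using hl.1, hl.2.1.map hf, (List.isChain_map f).mpr (hl.2.2.imp hAB)⟩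

theorem IsStable.image {f : α → β} (hBA : ∀ a b, B (f a) (f b) → A a b) {T : Set α}
    (hT : IsStable A T) : IsStable B (f '' T) := by
  rintro _ ⟨a, ha, rfl⟩ _ ⟨b, hb, rfl⟩ hne hab
  exact hT a ha b hb (fun h => hne (h ▸ rfl)) (hab.imp (hBA a b) (hBA b a))

theorem IsStable.preimage {f : α → β} (hf : Function.Injective f)
    (hAB : ∀ a b, A a b → B (f a) (f b)) {S : Set β} (hS : IsStable B S) :
    IsStable A (f ⁻¹' S) := fun a ha b hb hne hab =>
  hS (f a) ha (f b) hb (hf.ne hne) (hab.imp (hAB a b) (hAB b a))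

theorem IsMaxStable.preimage {f : α → β} (hf : Function.Injective f)
    (hAB : ∀ a b, A a b ↔ B (f a) (f b)) {S : Set β} (hS : IsMaxStable B S)
    (hSf : S ⊆ Set.range f) : IsMaxStable A (f ⁻¹' S) := by
  refine ⟨hS.1.preimage hf fun a b => (hAB a b).1, fun T hT => ?_⟩
  calc T.ncard = (f '' T).ncard := (Set.ncard_image_of_injective T hf).symm
    _ ≤ S.ncard := hS.2 _ (hT.image fun a b => (hAB a b).2)
    _ = (f ⁻¹' S).ncard := by
      rw [← Set.ncard_image_of_injective _ hf, Set.image_preimage_eq_of_subset hSf]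

theorem isStable_singleton (v : α) : IsStable A {v} := by
  rintro x rfl y rfl hxy
  exact absurd rfl hxy

theorem IsMaxStable.nonempty [Nonempty α] {S : Set α} (hS : IsMaxStable A S) : S.Nonempty := by
  have := hS.2 _ (isStable_singleton (Classical.arbitrary α))
  rw [Set.ncard_singleton] at this
  exact Set.nonempty_of_ncard_ne_zero (by omega)

theorem IsStable.eq_singleton_of_isUniversal {S : Set α} {v : α} (hS : IsStable A S)
    (hu : IsUniversal A v) (hv : v ∈ S) : S = {v} :=
  Set.eq_singleton_iff_unique_mem.mpr
    ⟨hv, fun u hu' => by_contra fun hne => hS u hu' v hv hne (hu u hne)⟩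

theorem IsMaxStable.semicomplete_of_singleton {v : α} (hS : IsMaxStable A {v}) :
    Semicomplete A := by
  intro u w hne
  by_contra hadj
  have hst : IsStable A {u, w} := by
    rintro x (rfl | rfl) y (rfl | rfl) hxy
    exacts [absurd rfl hxy, hadj, fun h => hadj h.symm, absurd rfl hxy]
  have := hS.2 _ hst
  rw [Set.ncard_singleton, Set.ncard_pair hne] at this
  omega

theorem IsSPartitionOn.isSPartition {S : Set α} {P : Set (List α)}
    (h : IsSPartitionOn A Set.univ S P) : IsSPartition A S P :=
  ⟨⟨h.isDiPath, fun x => h.existsUnique_mem x trivial⟩, h.existsUnique_mem_inter⟩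

theorem IsSPartition.map {f : α → β} (hf : Function.Injective f)
    (hAB : ∀ a b, A a b → B (f a) (f b)) {S : Set α} {P : Set (List α)}
    (h : IsSPartition A S P) :
    IsSPartitionOn B (Set.range f) (f '' S) (List.map f '' P) where
  isDiPath := by
    rintro _ ⟨l, hl, rfl⟩
    exact (h.1.1 l hl).map hf hAB
  subset := by
    rintro _ ⟨l, -, rfl⟩ x hx
    obtain ⟨a, -, rfl⟩ := List.mem_map.mp hx
    exact Set.mem_range_self a
  existsUnique_mem := by
    rintro _ ⟨a, rfl⟩
    obtain ⟨l, ⟨hl, hal⟩, huniq⟩ := h.1.2 a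
    refine ⟨l.map f, ⟨⟨l, hl, rfl⟩, List.mem_map_of_mem hal⟩, ?_⟩
    rintro _ ⟨⟨m, hm, rfl⟩, ham⟩
    rw [huniq m ⟨hm, (List.mem_map_of_injective hf).mp ham⟩]
  existsUnique_mem_inter := by
    rintro _ ⟨l, hl, rfl⟩
    obtain ⟨s, ⟨hsl, hsS⟩, huniq⟩ := h.2 l hl
    refine ⟨f s, ⟨List.mem_map_of_mem hsl, s, hsS, rfl⟩, ?_⟩
    rintro _ ⟨htl, t, htS, rfl⟩
    rw [huniq t ⟨(List.mem_map_of_injective hf).mp htl, htS⟩]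

theorem IsSPartitionOn.exists_insert {W S : Set α} {P : Set (List α)}
    (h : IsSPartitionOn A W S P) {l : List α} (hl : l ∈ P) {v : α} (hvW : v ∉ W)
    (hvS : v ∉ S) (hadj : ∀ u ∈ l, DAdj A u v) : ∃ P', IsSPartitionOn A (insert v W) S P' := by
  have hvl : v ∉ l := fun hv => hvW (h.subset l hl v hv)
  obtain ⟨l', hl', hperm⟩ := (h.isDiPath l hl).exists_perm_cons hvl hadj
  have hmem : ∀ x, x ∈ l' ↔ x = v ∨ x ∈ l := fun x => by rw [hperm.mem_iff, List.mem_cons]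
  have hunique : ∀ x ∈ l, ∀ m ∈ P, x ∈ m → m = l := fun x hx m hm hxm =>
    (h.existsUnique_mem x (h.subset l hl x hx)).unique ⟨hm, hxm⟩ ⟨hl, hx⟩
  refine ⟨insert l' (P \ {l}), ?_, ?_, ?_, ?_⟩
  · rintro m (rfl | ⟨hm, -⟩)
    exacts [hl', h.isDiPath m hm]
  · rintro m (rfl | ⟨hm, -⟩) x hx
    · rcases (hmem x).mp hx with rfl | hx
      exacts [Set.mem_insert _ _, Set.mem_insert_of_mem _ (h.subset l hl x hx)]
    · exact Set.mem_insert_of_mem _ (h.subset m hm x hx)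
  · rintro x (rfl | hxW)
    · refine ⟨l', ⟨Set.mem_insert _ _, (hmem x).mpr (Or.inl rfl)⟩, ?_⟩
      rintro m ⟨rfl | ⟨hm, -⟩, hxm⟩
      exacts [rfl, absurd (h.subset m hm x hxm) hvW]
    obtain ⟨m, ⟨hm, hxm⟩, huniq⟩ := h.existsUnique_mem x hxW
    by_cases hml : m = l
    · subst hml
      refine ⟨l', ⟨Set.mem_insert _ _, (hmem x).mpr (Or.inr hxm)⟩, ?_⟩
      rintro m' ⟨rfl | ⟨hm', hm'l⟩, hxm'⟩
      exacts [rfl, absurd (huniq m' ⟨hm', hxm'⟩) hm'l]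
    · refine ⟨m, ⟨Set.mem_insert_of_mem _ ⟨hm, hml⟩, hxm⟩, ?_⟩
      rintro m' ⟨rfl | ⟨hm', -⟩, hxm'⟩
      · rcases (hmem x).mp hxm' with rfl | hxl
        exacts [absurd hxW hvW, absurd (hunique x hxl m hm hxm) hml]
      · exact huniq m' ⟨hm', hxm'⟩
  · rintro m (rfl | ⟨hm, -⟩)
    · obtain ⟨s, ⟨hsl, hsS⟩, huniq⟩ := h.existsUnique_mem_inter l hl
      refine ⟨s, ⟨(hmem s).mpr (Or.inr hsl), hsS⟩, ?_⟩
      rintro t ⟨htl', htS⟩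
      rcases (hmem t).mp htl' with rfl | htl
      exacts [absurd htS hvS, huniq t ⟨htl, htS⟩]
    · exact h.existsUnique_mem_inter m hm

theorem IsDiPath.isSPartition_singleton {l : List α} (hl : IsDiPath A l) (hall : ∀ x, x ∈ l)
    (s : α) : IsSPartition A {s} {l} := by
  refine ⟨⟨fun m hm => hm ▸ hl, fun x => ⟨l, ⟨rfl, hall x⟩, fun m hm => hm.1⟩⟩, ?_⟩
  rintro _ rfl
  exact ⟨s, ⟨hall s, rfl⟩, fun t ht => ht.2⟩

theorem AlphaProperty.of_equiv (e : α ≃ β) (he : ∀ a b, A a b ↔ B (e a) (e b))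
    (hB : AlphaProperty B) : AlphaProperty A := by
  have he' : ∀ a b, B a b ↔ A (e.symm a) (e.symm b) := by simp [he]
  intro S hS
  obtain ⟨P, hP⟩ := hB _ (hS.preimage e.symm.injective he' (by simp))
  have hP' := hP.map e.symm.injective fun a b => (he' a b).1
  rw [e.symm.range_eq_univ, e.symm.image_preimage] at hP'
  exact ⟨_, hP'.isSPartition⟩

theorem AlphaDiperfect.alphaProperty_of_injective (hB : AlphaDiperfect B) {f : α → β}
    (hf : Function.Injective f) (hAB : ∀ a b, A a b ↔ B (f a) (f b)) : AlphaProperty A :=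
  (hB (Set.range f)).of_equiv (Equiv.ofInjective f hf) hAB

theorem IsUniversal.alphaProperty [Finite α] {v : α} (hu : IsUniversal A v)
    (h : AlphaProperty fun a b : {u : α // u ≠ v} => A a.1 b.1) : AlphaProperty A := by
  have : Nonempty α := ⟨v⟩
  intro S hS
  by_cases hvS : v ∈ S
  · obtain rfl := hS.1.eq_singleton_of_isUniversal hu hvS
    obtain ⟨l, hl, hall⟩ := hS.semicomplete_of_singleton.exists_hamiltonian_isDiPath
    exact ⟨{l}, hl.isSPartition_singleton hall v⟩
  have hSv : S ⊆ Set.range (Subtype.val : {u : α // u ≠ v} → α) :=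
    fun s hs => ⟨⟨s, ne_of_mem_of_not_mem hs hvS⟩, rfl⟩
  obtain ⟨P, hP⟩ := h _ (hS.preimage Subtype.val_injective (fun _ _ => Iff.rfl) hSv)
  have hQ := hP.map Subtype.val_injective fun _ _ => id
  rw [Subtype.range_coe_subtype, Set.image_preimage_eq_of_subset hSv] at hQ
  obtain ⟨s, hs⟩ := hS.nonempty
  obtain ⟨l, ⟨hl, -⟩, -⟩ := hQ.existsUnique_mem s (ne_of_mem_of_not_mem hs hvS)
  obtain ⟨P', hP'⟩ := hQ.exists_insert hl (fun hv => hv rfl) hvS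
    fun u hul => hu u (hQ.subset l hl u hul)
  rw [show insert v {x | x ≠ v} = Set.univ from Set.ext fun x => iff_true_intro (em _)] at hP'
  exact ⟨P', hP'.isSPartition⟩

end

theorem universal_alphaDiperfect_iff_general {V : Type*} [Finite V] (A : V → V → Prop)
    (v : V) (hu : IsUniversal A v) :
    AlphaDiperfect A ↔ AlphaDiperfect (fun a b : {u : V // u ≠ v} => A a.1 b.1) := by
  constructor
  · intro hA W
    exact hA.alphaProperty_of_injective (Subtype.val_injective.comp Subtype.val_injective)
      fun _ _ => Iff.rfl
  · intro hA W
    by_cases hvW : v ∈ W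
    · refine IsUniversal.alphaProperty (v := ⟨v, hvW⟩)
        (fun u hne => hu u fun h => hne (Subtype.ext h)) ?_
      exact hA.alphaProperty_of_injective (f := fun u => ⟨u.1.1, fun h => u.2 (Subtype.ext h)⟩)
        (fun a b h => Subtype.ext (Subtype.ext (Subtype.mk.inj h))) fun _ _ => Iff.rfl
    · exact hA.alphaProperty_of_injective (f := fun u : W => ⟨u.1, fun h => hvW (h ▸ u.2)⟩)
        (fun a b h => Subtype.ext (Subtype.mk.inj h)) fun _ _ => Iff.rfl

/-- If `v` is a universal vertex of `D`, then `D` is α-diperfect iff `D - v` is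
α-diperfect. -/
theorem universal_alphaDiperfect_iff {V : Type*} [Finite V] (A : V → V → Prop)
    (hirr : ∀ v, ¬ A v v) (v : V) (hu : IsUniversal A v) :
    AlphaDiperfect A ↔ AlphaDiperfect (fun a b : {u : V // u ≠ v} => A a.1 b.1) :=
  universal_alphaDiperfect_iff_general A v hu
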